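/- The Pack-R rule preserves well-formedness: let σ = ⟨M,G,L, tv₁::⋯::tvₙ::S⟩ be a well-formed state, s ∈ 𝓣 a resource type, v = {(fᵢ,tvᵢ) | 1 ≤ i ≤ n} a record value of type s such that ⟨v,t⟩ is a well-formed tagged value for t ∈ R, and suppose t is fresh, i.e., t does not occur as the tag of any subterm of any value in img(M) or of any tagged value in tv₁::⋯::tvₙ::S. Then the state ⟨M, G, L, ⟨v,t⟩::S⟩ is well-formed. -/

import Mathlib

namespace MoveSem

/-- Tags: either the non-resource tag `U` or a resource tag drawn from `RTag`. -/
inductive MTag (RTag : Type) : Type where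
  | U : MTag RTag
  | res : RTag → MTag RTag

/-- Values: primitive values, or record values.  A record value is a non-empty finite
partial function from field names to tagged values, represented as an association
list (non-emptiness and distinctness of field names are imposed in the
well-formedness predicates below). -/
inductive Val (Prim Fld RTag : Type) : Type where
  | prim : Prim → Val Prim Fld RTag
  | record : List (Fld × (Val Prim Fld RTag × MTag RTag)) → Val Prim Fld RTag

/-- Tagged values: a value paired with a tag. -/
abbrev TVal (Prim Fld RTag : Type) : Type := Val Prim Fld RTag × MTag RTag

variable {Loc Prim Var Fld RTag Ty : Type}

/-- Lookup in an association list (the partial-function reading of a record). -/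
def lookupF {α : Type} [DecidableEq Fld] : List (Fld × α) → Fld → Option α
  | [], _ => none
  | (g, a) :: rest, f => if g = f then some a else lookupF rest f

/-- The subterm `tv[p]` of a tagged value located at path `p`. -/
def subTV [DecidableEq Fld] : TVal Prim Fld RTag → List Fld → Option (TVal Prim Fld RTag)
  | tv, [] => some tv
  | (Val.record flds, _), f :: p =>
    match lookupF flds f with
    | some tv' => subTV tv' p
    | none => none
  | (Val.prim _, _), _ :: _ => none

/-- The replacement `tv[p := tv']` of the subterm at path `p` by `tv'`. -/
def setSubTV [DecidableEq Fld] : TVal Prim Fld RTag → List Fld → TVal Prim Fld RTag →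
    Option (TVal Prim Fld RTag)
  | _, [], tv' => some tv'
  | (Val.record flds, t), f :: p, tv' =>
    match lookupF flds f with
    | some tvf =>
      match setSubTV tvf p tv' with
      | some tvf' =>
        some (Val.record (flds.map fun ft => if ft.1 = f then (ft.1, tvf') else ft), t)
      | none => none
    | none => none
  | (Val.prim _, _), _ :: _, _ => none

/-- A tagged value is a *resource* when the type of its value is a resource type. -/
def IsRes (typeOf : Val Prim Fld RTag → Ty) (ResTy : Set Ty) (tv : TVal Prim Fld RTag) : Prop :=
  typeOf tv.1 ∈ ResTy

/-- Well-formed tagged values: the tag is a resource tag iff the type is a resource type,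
and either the value is primitive, or it is a (non-empty, duplicate-free) record value all
of whose field values are well-formed and, in case the type is not a resource type, none of
whose field values is a resource. -/
inductive WFTV (typeOf : Val Prim Fld RTag → Ty) (ResTy : Set Ty) :
    TVal Prim Fld RTag → Prop where
  | prim (p : Prim) (t : MTag RTag)
      (hiff : typeOf (Val.prim p) ∈ ResTy ↔ t ≠ MTag.U) :
      WFTV typeOf ResTy (Val.prim p, t)
  | record (flds : List (Fld × TVal Prim Fld RTag)) (t : MTag RTag)
      (hne : flds ≠ [])
      (hnodup : (flds.map Prod.fst).Nodup)
      (hwf : ∀ f tv, (f, tv) ∈ flds → WFTV typeOf ResTy tv)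
      (hiff : typeOf (Val.record flds) ∈ ResTy ↔ t ≠ MTag.U)
      (hnores : typeOf (Val.record flds) ∉ ResTy →
        ∀ f tv, (f, tv) ∈ flds → ¬ IsRes typeOf ResTy tv) :
      WFTV typeOf ResTy (Val.record flds, t)

/-- References: a location, a path, and a mutability qualifier (`true` = mut). -/
structure MRef (Loc Fld : Type) : Type where
  loc : Loc
  path : List Fld
  mutq : Bool

/-- Stack values: tagged values, references, or (for `Branch`) locations. -/
abbrev SVal (Loc Prim Fld RTag : Type) : Type :=
  TVal Prim Fld RTag ⊕ (MRef Loc Fld ⊕ Loc)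

def SV.tv (tv : TVal Prim Fld RTag) : SVal Loc Prim Fld RTag := Sum.inl tv
def SV.ref (r : MRef Loc Fld) : SVal Loc Prim Fld RTag := Sum.inr (Sum.inl r)
def SV.loc (c : Loc) : SVal Loc Prim Fld RTag := Sum.inr (Sum.inr c)

/-- States: a memory, a global store, a local map, and an operand stack. -/
structure MState (Loc Prim Var Fld RTag Ty : Type) : Type where
  M : Loc → Option (TVal Prim Fld RTag)
  G : Prim × Ty → Option Loc
  L : Var → Option (Loc ⊕ MRef Loc Fld)
  S : List (SVal Loc Prim Fld RTag)

/-- Update (or delete, with `b = none`) a binding of a partial map. -/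
def upd {α β : Type} [DecidableEq α] (f : α → Option β) (a : α) (b : Option β) :
    α → Option β :=
  fun x => if x = a then b else f x

/-- Globally consistent states. -/
structure GloballyConsistent (typeOf : Val Prim Fld RTag → Ty) (ResTy : Set Ty)
    (σ : MState Loc Prim Var Fld RTag Ty) : Prop where
  wf_mem : ∀ c tv, σ.M c = some tv → WFTV typeOf ResTy tv
  wf_stack : ∀ tv, SV.tv tv ∈ σ.S → WFTV typeOf ResTy tv
  dom_eq : ∀ c, (∃ tv, σ.M c = some tv) ↔
    ((∃ g, σ.G g = some c) ∨ (∃ x, σ.L x = some (Sum.inl c)))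
  glob_ty : ∀ a s c, σ.G (a, s) = some c → ∃ v t, σ.M c = some (v, t) ∧ typeOf v = s

/-- Tag-consistent states: each resource tag occurs at most once among subterms of
memory values and stack entries. -/
structure TagConsistent [DecidableEq Fld] (σ : MState Loc Prim Var Fld RTag Ty) : Prop where
  mem_mem : ∀ c₁ c₂ tv₁ tv₂ p₁ p₂ v₁ v₂ t, σ.M c₁ = some tv₁ → σ.M c₂ = some tv₂ →
    subTV tv₁ p₁ = some (v₁, MTag.res t) → subTV tv₂ p₂ = some (v₂, MTag.res t) →
    c₁ = c₂ ∧ p₁ = p₂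
  stack_stack : ∀ (i₁ i₂ : ℕ) tv₁ tv₂ p₁ p₂ v₁ v₂ t,
    σ.S[i₁]? = some (SV.tv tv₁) → σ.S[i₂]? = some (SV.tv tv₂) →
    subTV tv₁ p₁ = some (v₁, MTag.res t) → subTV tv₂ p₂ = some (v₂, MTag.res t) →
    i₁ = i₂ ∧ p₁ = p₂
  mem_stack : ∀ c tv (i : ℕ) tv' p₁ p₂ v₁ v₂ t, σ.M c = some tv → σ.S[i]? = some (SV.tv tv') →
    subTV tv p₁ = some (v₁, MTag.res t) → subTV tv' p₂ = some (v₂, MTag.res t) → False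

/-- Non-aliasing states. -/
structure NonAliasing (σ : MState Loc Prim Var Fld RTag Ty) : Prop where
  locals : ∀ x₁ x₂ c, x₁ ≠ x₂ → σ.L x₁ = some (Sum.inl c) → σ.L x₂ = some (Sum.inl c) → False
  globals : ∀ g₁ g₂ c, g₁ ≠ g₂ → σ.G g₁ = some c → σ.G g₂ = some c → False
  glob_loc : ∀ g x c, σ.G g = some c → σ.L x = some (Sum.inl c) → False

/-- Well-formed states. -/
structure WFState [DecidableEq Fld] (typeOf : Val Prim Fld RTag → Ty) (ResTy : Set Ty)
    (σ : MState Loc Prim Var Fld RTag Ty) : Prop where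
  gc : GloballyConsistent typeOf ResTy σ
  tc : TagConsistent σ
  na : NonAliasing σ

/-- The resource tags of a state: tags occurring on some subterm of a value in the
image of the memory or of a tagged value on the stack. -/
def resources [DecidableEq Fld] (σ : MState Loc Prim Var Fld RTag Ty) : Set RTag :=
  { t | (∃ c tv p v, σ.M c = some tv ∧ subTV tv p = some (v, MTag.res t)) ∨
        (∃ tv, SV.tv tv ∈ σ.S ∧ ∃ p v, subTV tv p = some (v, MTag.res t)) }

theorem lookupF_mem {α : Type} [DecidableEq Fld] :
    ∀ (l : List (Fld × α)) (f : Fld) (a : α), lookupF l f = some a → (f, a) ∈ l := by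
  intro l
  induction l with
  | nil => intro f a h; simp [lookupF] at h
  | cons hd tl ih =>
    intro f a h
    obtain ⟨g, b⟩ := hd
    by_cases hgf : g = f
    · subst hgf
      simp [lookupF] at h
      subst h
      exact List.mem_cons_self
    · simp [lookupF, hgf] at h
      exact List.mem_cons_of_mem _ (ih f a h)

theorem subTV_record_cases [DecidableEq Fld] (flds : List (Fld × TVal Prim Fld RTag))
    (tg : MTag RTag) (p : List Fld) (r : TVal Prim Fld RTag)
    (h : subTV (Val.record flds, tg) p = some r) :
    (p = [] ∧ r = (Val.record flds, tg)) ∨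
    ∃ f p' tv, p = f :: p' ∧ lookupF flds f = some tv ∧ subTV tv p' = some r := by
  cases p with
  | nil =>
    left
    simp [subTV] at h
    exact ⟨rfl, h.symm⟩
  | cons f p' =>
    right
    cases hl : lookupF flds f with
    | none => simp [subTV, hl] at h
    | some tv => exact ⟨f, p', tv, rfl, hl, by simpa [subTV, hl] using h⟩

/-- The `Pack-R` rule preserves well-formedness. -/
theorem pack_r_preserves_wf {Loc Prim Var Fld RTag Ty : Type}
    [DecidableEq Loc] [DecidableEq Prim] [DecidableEq Var] [DecidableEq Fld] [DecidableEq Ty]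
    [Countable Loc] [Countable Prim] [Countable Var] [Countable RTag] [Finite Fld]
    (typeOf : Val Prim Fld RTag → Ty) (ResTy : Set Ty)
    (M : Loc → Option (TVal Prim Fld RTag)) (G : Prim × Ty → Option Loc)
    (L : Var → Option (Loc ⊕ MRef Loc Fld)) (S : List (SVal Loc Prim Fld RTag))
    (s : Ty) (flds : List (Fld × TVal Prim Fld RTag)) (t : RTag)
    (hwf : WFState typeOf ResTy (MState.mk M G L ((flds.map fun ft => SV.tv ft.2) ++ S)))
    (hs : s ∈ ResTy) (hty : typeOf (Val.record flds) = s)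
    -- ⟨v,t⟩ is a well-formed tagged value for the resource tag t:
    (hwftv : WFTV typeOf ResTy (Val.record flds, MTag.res t))
    -- t is fresh: it does not occur as the tag of any subterm of any value in the
    -- image of the memory or of any tagged value on the stack:
    (hfresh : t ∉ resources (MState.mk M G L ((flds.map fun ft => SV.tv ft.2) ++ S))) :
    WFState typeOf ResTy (MState.mk M G L (SV.tv (Val.record flds, MTag.res t) :: S)) := by
  set stk : List (SVal Loc Prim Fld RTag) := (flds.map fun ft => SV.tv ft.2) ++ S with hstk
  -- Indexing facts about the old stack
  have hstk_idx : ∀ (j : ℕ) (ft : Fld × TVal Prim Fld RTag), flds[j]? = some ft →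
      stk[j]? = some (SV.tv ft.2) := by
    intro j ft hj
    have hjlt : j < flds.length := by
      by_contra hge
      rw [List.getElem?_eq_none (by omega)] at hj
      exact Option.some_ne_none _ hj.symm
    have h1 : stk[j]? = (flds.map fun ft => SV.tv ft.2)[j]? :=
      List.getElem?_append_left (by simpa using hjlt)
    rw [h1]
    simp [hj]
  have hstk_S : ∀ (k : ℕ), stk[flds.length + k]? = S[k]? := by
    intro k
    rw [List.getElem?_append_right (by simp)]
    simp
  -- Decomposing subterms of the packed value
  have hpack : ∀ (p : List Fld) (r : TVal Prim Fld RTag),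
      subTV (Val.record flds, MTag.res t) p = some r →
      (p = [] ∧ r = (Val.record flds, MTag.res t)) ∨
      ∃ (j : ℕ) (f : Fld) (p' : List Fld) (tv : TVal Prim Fld RTag),
        p = f :: p' ∧ flds[j]? = some (f, tv) ∧ stk[j]? = some (SV.tv tv) ∧
        subTV tv p' = some r := by
    intro p r h
    rcases subTV_record_cases flds (MTag.res t) p r h with ⟨h1, h2⟩ | ⟨f, p', tv, hp, hl, hsub⟩
    · exact Or.inl ⟨h1, h2⟩
    · right
      obtain ⟨j, hj⟩ := List.getElem?_of_mem (lookupF_mem flds f tv hl)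
      exact ⟨j, f, p', tv, hp, hj, hstk_idx j (f, tv) hj, hsub⟩
  -- Freshness consequences
  have hfreshM : ∀ c tv p v, M c = some tv → subTV tv p ≠ some (v, MTag.res t) := by
    intro c tv p v hc hsub
    exact hfresh (Or.inl ⟨c, tv, p, v, hc, hsub⟩)
  have hfreshS : ∀ tv, SV.tv tv ∈ stk → ∀ p v, subTV tv p ≠ some (v, MTag.res t) := by
    intro tv hm p v hsub
    exact hfresh (Or.inr ⟨tv, hm, p, v, hsub⟩)
  obtain ⟨gc, tc, na⟩ := hwf
  refine ⟨?_, ?_, ?_⟩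
  · -- Global consistency
    refine ⟨gc.wf_mem, ?_, gc.dom_eq, gc.glob_ty⟩
    intro tv hm
    rcases List.mem_cons.1 hm with h | h
    · have : tv = (Val.record flds, MTag.res t) := by
        simpa [SV.tv] using h
      rw [this]; exact hwftv
    · exact gc.wf_stack tv (List.mem_append_right _ h)
  · -- Tag consistency
    refine ⟨tc.mem_mem, ?_, ?_⟩
    · -- stack_stack
      intro i₁ i₂ tv₁ tv₂ p₁ p₂ v₁ v₂ t' h₁ h₂ hs₁ hs₂
      -- helper: decompose a subterm with tag t' of an entry of the new stack
      cases i₁ with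
      | zero =>
        have htv₁ : tv₁ = (Val.record flds, MTag.res t) := by
          simp [SV.tv] at h₁; exact h₁.symm
        subst htv₁
        cases i₂ with
        | zero =>
          have htv₂ : tv₂ = (Val.record flds, MTag.res t) := by
            simp [SV.tv] at h₂; exact h₂.symm
          subst htv₂
          rcases hpack p₁ _ hs₁ with ⟨hp₁, hr₁⟩ | ⟨j₁, f₁, p₁', tvj₁, hp₁, hfj₁, hsj₁, hsub₁⟩
          · rcases hpack p₂ _ hs₂ with ⟨hp₂, hr₂⟩ | ⟨j₂, f₂, p₂', tvj₂, hp₂, hfj₂, hsj₂, hsub₂⟩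
            · exact ⟨rfl, hp₁.trans hp₂.symm⟩
            · have ht' : t' = t := by
                have := hr₁; simp at this; exact this.2
              subst ht'
              exact absurd hsub₂ (hfreshS tvj₂ (List.mem_of_getElem? hsj₂) p₂' v₂)
          · rcases hpack p₂ _ hs₂ with ⟨hp₂, hr₂⟩ | ⟨j₂, f₂, p₂', tvj₂, hp₂, hfj₂, hsj₂, hsub₂⟩
            · have ht' : t' = t := by
                have := hr₂; simp at this; exact this.2
              subst ht'
              exact absurd hsub₁ (hfreshS tvj₁ (List.mem_of_getElem? hsj₁) p₁' v₁)
            · obtain ⟨hjeq, hpeq⟩ :=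
                tc.stack_stack j₁ j₂ tvj₁ tvj₂ p₁' p₂' v₁ v₂ t' hsj₁ hsj₂ hsub₁ hsub₂
              subst hjeq
              have : (f₁, tvj₁) = (f₂, tvj₂) := by
                rw [hfj₁] at hfj₂; exact Option.some.inj hfj₂
              injection this with hf _
              refine ⟨rfl, ?_⟩
              rw [hp₁, hp₂, hf, hpeq]
        | succ k₂ =>
          have h₂' : stk[flds.length + k₂]? = some (SV.tv tv₂) := by
            rw [hstk_S k₂]; simpa using h₂
          rcases hpack p₁ _ hs₁ with ⟨hp₁, hr₁⟩ | ⟨j₁, f₁, p₁', tvj₁, hp₁, hfj₁, hsj₁, hsub₁⟩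
          · have ht' : t' = t := by
              have := hr₁; simp at this; exact this.2
            subst ht'
            exact absurd hs₂ (hfreshS tv₂ (List.mem_of_getElem? h₂') p₂ v₂)
          · obtain ⟨hjeq, _⟩ :=
              tc.stack_stack j₁ (flds.length + k₂) tvj₁ tv₂ p₁' p₂ v₁ v₂ t' hsj₁ h₂' hsub₁ hs₂
            have hjlt : j₁ < flds.length := by
              by_contra hge
              rw [List.getElem?_eq_none (by omega)] at hfj₁
              exact Option.some_ne_none _ hfj₁.symm
            omega
      | succ k₁ =>
        have h₁' : stk[flds.length + k₁]? = some (SV.tv tv₁) := by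
          rw [hstk_S k₁]; simpa using h₁
        cases i₂ with
        | zero =>
          have htv₂ : tv₂ = (Val.record flds, MTag.res t) := by
            simp [SV.tv] at h₂; exact h₂.symm
          subst htv₂
          rcases hpack p₂ _ hs₂ with ⟨hp₂, hr₂⟩ | ⟨j₂, f₂, p₂', tvj₂, hp₂, hfj₂, hsj₂, hsub₂⟩
          · have ht' : t' = t := by
              have := hr₂; simp at this; exact this.2
            subst ht'
            exact absurd hs₁ (hfreshS tv₁ (List.mem_of_getElem? h₁') p₁ v₁)
          · obtain ⟨hjeq, _⟩ :=
              tc.stack_stack (flds.length + k₁) j₂ tv₁ tvj₂ p₁ p₂' v₁ v₂ t' h₁' hsj₂ hs₁ hsub₂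
            have hjlt : j₂ < flds.length := by
              by_contra hge
              rw [List.getElem?_eq_none (by omega)] at hfj₂
              exact Option.some_ne_none _ hfj₂.symm
            omega
        | succ k₂ =>
          have h₂' : stk[flds.length + k₂]? = some (SV.tv tv₂) := by
            rw [hstk_S k₂]; simpa using h₂
          obtain ⟨hjeq, hpeq⟩ :=
            tc.stack_stack (flds.length + k₁) (flds.length + k₂) tv₁ tv₂ p₁ p₂ v₁ v₂ t'
              h₁' h₂' hs₁ hs₂
          exact ⟨by omega, hpeq⟩
    · -- mem_stack
      intro c tv i tv' p₁ p₂ v₁ v₂ t' hc hi hsub₁ hsub₂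
      cases i with
      | zero =>
        have htv' : tv' = (Val.record flds, MTag.res t) := by
          simp [SV.tv] at hi; exact hi.symm
        subst htv'
        rcases hpack p₂ _ hsub₂ with ⟨hp₂, hr₂⟩ | ⟨j, f, p', tvj, hp₂, hfj, hsj, hsub⟩
        · have ht' : t' = t := by
            have := hr₂; simp at this; exact this.2
          subst ht'
          exact hfreshM c tv p₁ v₁ hc hsub₁
        · exact tc.mem_stack c tv j tvj p₁ p' v₁ v₂ t' hc hsj hsub₁ hsub
      | succ k =>
        have hi' : stk[flds.length + k]? = some (SV.tv tv') := by
          rw [hstk_S k]; simpa using hi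
        exact tc.mem_stack c tv (flds.length + k) tv' p₁ p₂ v₁ v₂ t' hc hi' hsub₁ hsub₂
  · -- Non-aliasing
    exact ⟨na.locals, na.globals, na.glob_loc⟩

end MoveSem
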